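/- Let G = ℤ * (ℤ/2ℤ) with generators σ and τ as above, and let m ≥ 3. The normal closure in G of {σ^m} has infinite index in G, whereas the normal closure of {στστ, σ^m} has index 2m. In particular the two normal closures are distinct. -/

import Mathlib

/-!
The quotient by `⟨⟨στστ, σ^m⟩⟩` is the dihedral group `D_m`: the map `σ ↦ r 1`, `τ ↦ sr 0` onto
`D_m` kills both relators, and conversely the images of `σ, τ` in `G ⧸ ⟨⟨στστ, σ^m⟩⟩` satisfy the
defining relations of `D_m`, which gives an inverse map.

The quotient by `⟨⟨σ^m⟩⟩` is infinite because it maps onto the group of affine maps of `ℂ` generated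
by `z ↦ ζz` and `z ↦ 1 - z` for a primitive `m`-th root of unity `ζ ≠ 1`; there `στσ⁻¹τ` acts as the
translation `z ↦ z + (ζ - 1)`, of infinite order. But every element has a positive power (its
`index`-th power) in a finite-index normal subgroup, so no such subgroup lies in that kernel.
-/

open Monoid Multiplicative
open scoped Monoid.Coprod

/-- The generator `σ` of the `ℤ` factor of `ℤ * (ℤ/2ℤ)`. -/
def vsigma : Monoid.Coprod (Multiplicative ℤ) (Multiplicative (ZMod 2)) :=
  Monoid.Coprod.inl (Multiplicative.ofAdd (1 : ℤ))

/-- The generator `τ` of the `ℤ/2ℤ` factor of `ℤ * (ℤ/2ℤ)`. -/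
def vtau : Monoid.Coprod (Multiplicative ℤ) (Multiplicative (ZMod 2)) :=
  Monoid.Coprod.inr (Multiplicative.ofAdd (1 : ZMod 2))

theorem vtau_sq : vtau ^ 2 = 1 := by
  have h : ofAdd (1 : ZMod 2) ^ 2 = 1 := by decide
  rw [vtau, ← map_pow, h, map_one]

section zmodPowersHom

variable {n : ℕ} [NeZero n] {H : Type*} [Monoid H]

def zmodPowersHom (x : H) (hx : x ^ n = 1) : Multiplicative (ZMod n) →* H where
  toFun a := x ^ (toAdd a).val
  map_one' := by simp
  map_mul' a b := by
    change x ^ (toAdd a + toAdd b).val = _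
    rw [ZMod.val_add, ← pow_eq_pow_mod _ hx, pow_add]

theorem zmodPowersHom_ofAdd (x : H) (hx : x ^ n = 1) (a : ZMod n) :
    zmodPowersHom x hx (ofAdd a) = x ^ a.val := rfl

theorem zmodPowersHom_ofAdd_natCast (x : H) (hx : x ^ n = 1) (k : ℕ) :
    zmodPowersHom x hx (ofAdd (k : ZMod n)) = x ^ k := by
  rw [zmodPowersHom_ofAdd, ZMod.val_natCast, ← pow_eq_pow_mod _ hx]

theorem zmodPowersHom_ofAdd_one (x : H) (hx : x ^ n = 1) :
    zmodPowersHom x hx (ofAdd 1) = x := by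
  simpa using zmodPowersHom_ofAdd_natCast x hx 1

end zmodPowersHom

section liftSigmaTau

variable {H : Type*} [Group H]

def liftSigmaTau (a t : H) (ht : t ^ 2 = 1) :
    Multiplicative ℤ ∗ Multiplicative (ZMod 2) →* H :=
  Coprod.lift (zpowersHom H a) (zmodPowersHom t ht)

@[simp]
theorem liftSigmaTau_vsigma (a t : H) (ht : t ^ 2 = 1) : liftSigmaTau a t ht vsigma = a := by
  simp [liftSigmaTau, vsigma]

@[simp]
theorem liftSigmaTau_vtau (a t : H) (ht : t ^ 2 = 1) : liftSigmaTau a t ht vtau = t := by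
  simp [liftSigmaTau, vtau, zmodPowersHom_ofAdd_one]

theorem hom_ext_vsigma_vtau {f g : Multiplicative ℤ ∗ Multiplicative (ZMod 2) →* H}
    (hσ : f vsigma = g vsigma) (hτ : f vtau = g vtau) : f = g := by
  refine Coprod.hom_ext (MonoidHom.ext_mint hσ) (MonoidHom.ext fun x => ?_)
  obtain rfl | rfl : x = 1 ∨ x = ofAdd 1 := by revert x; decide
  · simp only [map_one]
  · exact hτ

end liftSigmaTau

theorem mul_pow_mul_eq_inv_pow {Q : Type*} [Group Q] {a t : Q} (ht : t ^ 2 = 1)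
    (hat : a * t * a * t = 1) (k : ℕ) : t * a ^ k * t = (a ^ k)⁻¹ := by
  have ht' : t⁻¹ = t := inv_eq_of_mul_eq_one_right (by rw [← sq, ht])
  have hconj : t * a * t⁻¹ = a⁻¹ := by
    rw [ht']
    exact eq_inv_of_mul_eq_one_right (by simpa only [mul_assoc] using hat)
  rw [← inv_pow, ← hconj, conj_pow, ht']

namespace DihedralGroup

variable {n : ℕ} [NeZero n] {Q : Type*} [Group Q]

def lift (a t : Q) (ha : a ^ n = 1) (ht : t ^ 2 = 1) (hat : a * t * a * t = 1) :
    DihedralGroup n →* Q where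
  toFun
    | r i => zmodPowersHom a ha (ofAdd i)
    | sr i => t * zmodPowersHom a ha (ofAdd i)
  map_one' := map_one (zmodPowersHom a ha)
  map_mul' x y := by
    set χ := zmodPowersHom a ha
    have hadd (i j : ZMod n) : χ (ofAdd i) * χ (ofAdd j) = χ (ofAdd (i + j)) := by
      rw [← map_mul, ofAdd_add]
    have hsub (i j : ZMod n) : (χ (ofAdd i))⁻¹ * χ (ofAdd j) = χ (ofAdd (j - i)) := by
      rw [← map_inv, ← map_mul, ← ofAdd_neg, ← ofAdd_add, neg_add_eq_sub]
    have hconj (i : ZMod n) : t * χ (ofAdd i) * t = (χ (ofAdd i))⁻¹ :=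
      mul_pow_mul_eq_inv_pow ht hat _
    have hswap (i : ZMod n) : χ (ofAdd i) * t = t * (χ (ofAdd i))⁻¹ := by
      rw [← hconj, ← mul_assoc, ← mul_assoc, ← sq, ht, one_mul]
    cases x <;> cases y <;>
      simp only [r_mul_r, r_mul_sr, sr_mul_r, sr_mul_sr, ← hadd, ← hsub, ← mul_assoc, hswap, hconj]

variable {a t : Q} {ha : a ^ n = 1} {ht : t ^ 2 = 1} {hat : a * t * a * t = 1}

@[simp]
theorem lift_r_one : lift a t ha ht hat (r 1) = a :=
  zmodPowersHom_ofAdd_one a ha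

@[simp]
theorem lift_sr_zero : lift a t ha ht hat (sr 0) = t := by
  change t * zmodPowersHom a ha (ofAdd 0) = t
  rw [ofAdd_zero, map_one, mul_one]

end DihedralGroup

open DihedralGroup

def toDihedral (m : ℕ) : Multiplicative ℤ ∗ Multiplicative (ZMod 2) →* DihedralGroup m :=
  liftSigmaTau (r 1) (sr 0) (by rw [sq, sr_mul_self])

theorem toDihedral_surjective (m : ℕ) : Function.Surjective (toDihedral m) := by
  rintro (i | i) <;> obtain ⟨k, rfl⟩ := ZMod.intCast_surjective i
  · exact ⟨vsigma ^ k, by simp [toDihedral]⟩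
  · exact ⟨vtau * vsigma ^ k, by simp [toDihedral]⟩

theorem ker_toDihedral (m : ℕ) [NeZero m] :
    (toDihedral m).ker = Subgroup.normalClosure {vsigma * vtau * vsigma * vtau, vsigma ^ m} := by
  set N := Subgroup.normalClosure {vsigma * vtau * vsigma * vtau, vsigma ^ m}
  refine le_antisymm ?_ (Subgroup.normalClosure_le_normal ?_)
  · set s := QuotientGroup.mk' N vsigma
    set t := QuotientGroup.mk' N vtau
    have hs : s ^ m = 1 := by
      rw [← map_pow, QuotientGroup.mk'_apply, QuotientGroup.eq_one_iff]
      exact Subgroup.subset_normalClosure (by simp)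
    have ht : t ^ 2 = 1 := by rw [← map_pow, vtau_sq, map_one]
    have hst : s * t * s * t = 1 := by
      rw [← map_mul, ← map_mul, ← map_mul, QuotientGroup.mk'_apply, QuotientGroup.eq_one_iff]
      exact Subgroup.subset_normalClosure (by simp)
    have hcomp : (lift s t hs ht hst).comp (toDihedral m) = QuotientGroup.mk' N :=
      hom_ext_vsigma_vtau (by simp [toDihedral, s]) (by simp [toDihedral, t])
    calc (toDihedral m).ker ≤ (lift s t hs ht hst).ker.comap (toDihedral m) :=
        (toDihedral m).ker_le_comap _
      _ = N := by rw [MonoidHom.comap_ker, hcomp, QuotientGroup.ker_mk']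
  · rintro x (rfl | rfl) <;> simp [toDihedral]

theorem index_normalClosure_dihedralRelators (m : ℕ) [NeZero m] :
    (Subgroup.normalClosure {vsigma * vtau * vsigma * vtau, vsigma ^ m}).index = 2 * m := by
  rw [← ker_toDihedral, Subgroup.index_ker, MonoidHom.range_eq_top.2 (toDihedral_surjective m),
    Subgroup.card_top, nat_card]

theorem Subgroup.not_finiteIndex_normalClosure_of_not_isOfFinOrder {G H : Type*} [Group G]
    [Group H] {s : Set G} (f : G →* H) (hs : s ⊆ f.ker) {g : G} (hg : ¬IsOfFinOrder (f g)) :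
    ¬(normalClosure s).FiniteIndex := by
  intro hfin
  refine hg (isOfFinOrder_iff_pow_eq_one.2 ⟨_, Nat.pos_of_ne_zero hfin.index_ne_zero, ?_⟩)
  rw [← map_pow]
  exact normalClosure_le_normal hs (pow_index_mem _ g)

theorem Equiv.Perm.not_isOfFinOrder_of_apply_eq_add {α : Type*} [AddMonoid α]
    [IsAddTorsionFree α] {c : Perm α} {a : α} (ha : a ≠ 0) (hc : ∀ z, c z = z + a) :
    ¬IsOfFinOrder c := by
  have hpow (k : ℕ) : (c ^ k) 0 = k • a := by
    induction k with
    | zero => simp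
    | succ k ih => rw [pow_succ', Perm.mul_apply, ih, hc, succ_nsmul]
  rintro hfin
  obtain ⟨k, hk, hck⟩ := isOfFinOrder_iff_pow_eq_one.1 hfin
  have := hpow k
  rw [hck, Perm.one_apply, eq_comm, nsmul_eq_zero_iff] at this
  exact this.elim ha hk.ne'

theorem not_finiteIndex_normalClosure_vsigma_pow {m : ℕ} (hm : 1 < m) :
    ¬(Subgroup.normalClosure {vsigma ^ m}).FiniteIndex := by
  have hζ := Complex.isPrimitiveRoot_exp m (by omega)
  set ζ := Complex.exp (2 * Real.pi * Complex.I / m)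
  set u := (hζ.isUnit (by omega)).unit
  let rot : Equiv.Perm ℂ := MulAction.toPermHom ℂˣ ℂ u
  let refl : Equiv.Perm ℂ := Equiv.subLeft 1
  have hrefl : refl ^ 2 = 1 := by
    ext z
    simp [sq, refl]
  refine Subgroup.not_finiteIndex_normalClosure_of_not_isOfFinOrder (liftSigmaTau rot refl hrefl)
    (g := vsigma * vtau * vsigma⁻¹ * vtau) ?_ ?_
  · have hu : u ^ m = 1 := Units.ext (by simp [u, hζ.pow_eq_one])
    rintro x rfl
    rw [SetLike.mem_coe, MonoidHom.mem_ker, map_pow, liftSigmaTau_vsigma, ← map_pow, hu, map_one]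
  · refine Equiv.Perm.not_isOfFinOrder_of_apply_eq_add (a := ζ - 1) (sub_ne_zero.2 (hζ.ne_one hm))
      fun z => ?_
    have hζ0 : ζ ≠ 0 := hζ.ne_zero (by omega)
    simp only [map_mul, map_inv, liftSigmaTau_vsigma, liftSigmaTau_vtau, Equiv.Perm.coe_mul,
      Equiv.Perm.coe_inv, Function.comp_apply, Equiv.subLeft_apply, MulAction.toPermHom_apply,
      MulAction.toPerm_symm_apply, MulAction.toPerm_apply, Units.smul_def, Units.val_inv_eq_inv_val,
      IsUnit.unit_spec, smul_eq_mul, rot, u, refl]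
    field_simp
    ring

/-- In `G = ℤ * (ℤ/2ℤ)` with generators `σ`, `τ`, for `m ≥ 3` the normal closure of
`{σ^m}` has infinite index, whereas the normal closure of `{στστ, σ^m}` has index `2m`;
in particular the two normal closures are distinct. -/
theorem stmt9 (m : ℕ) (hm : 3 ≤ m) :
    ¬ (Subgroup.normalClosure {vsigma ^ m}).FiniteIndex ∧
    (Subgroup.normalClosure {vsigma * vtau * vsigma * vtau, vsigma ^ m}).index = 2 * m ∧
    Subgroup.normalClosure {vsigma ^ m}
      ≠ Subgroup.normalClosure {vsigma * vtau * vsigma * vtau, vsigma ^ m} := by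
  have : NeZero m := ⟨by omega⟩
  have hinfinite := not_finiteIndex_normalClosure_vsigma_pow (by omega : 1 < m)
  have hindex := index_normalClosure_dihedralRelators m
  refine ⟨hinfinite, hindex, fun heq => hinfinite ?_⟩
  rw [heq]
  exact ⟨by omega⟩
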